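/- Let Π be a program with an epistemic splitting set U ⊆ At and a splitting ⟨B_U(Π),T_U(Π)⟩. Then a total belief view W is a FEEL-world view of Π if and only if W is a FEEL-world view of B_U(Π) ∪ E_U(Π,W). -/

import Mathlib

namespace Epist

attribute [local instance] Classical.propDecidable

/-- Epistemic formulas over a set (type) of atoms `α`. -/
inductive EForm (α : Type) : Type where
  | bot : EForm α
  | atom : α → EForm α
  | and : EForm α → EForm α → EForm α
  | or : EForm α → EForm α → EForm α
  | imp : EForm α → EForm α → EForm α
  | K : EForm α → EForm α

variable {α : Type}

/-- ¬φ abbreviates φ → ⊥. -/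
def EForm.neg (φ : EForm α) : EForm α := .imp φ .bot

/-- ⊤ abbreviates ¬⊥. -/
def EForm.top : EForm α := EForm.neg .bot

/-- Atoms occurring in a formula. -/
def EForm.atoms : EForm α → Set α
  | .bot => ∅
  | .atom a => {a}
  | .and φ ψ => φ.atoms ∪ ψ.atoms
  | .or φ ψ => φ.atoms ∪ ψ.atoms
  | .imp φ ψ => φ.atoms ∪ ψ.atoms
  | .K φ => φ.atoms

/-- A belief view: a set of HT-interpretations ⟨H,T⟩ (as pairs of sets of atoms). -/
abbrev BView (α : Type) := Set (Set α × Set α)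

/-- W^t : the total belief view {⟨T,T⟩ : ⟨H,T⟩ ∈ W}. -/
def tview (W : BView α) : BView α := (fun i => (i.2, i.2)) '' W

/-- Wellformedness of a belief view: nonempty and H ⊆ T for all members. -/
def isBView (W : BView α) : Prop := W.Nonempty ∧ ∀ i ∈ W, i.1 ⊆ i.2

/-- A belief view is total when all its HT-interpretations are total. -/
def totalView (W : BView α) : Prop := ∀ i ∈ W, i.1 = i.2

/-- Satisfaction of an epistemic formula by a belief interpretation ⟨W,H,T⟩. -/
def sat : EForm α → BView α → Set α → Set α → Prop
  | .bot, _, _, _ => False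
  | .atom a, _, H, _ => a ∈ H
  | .and φ ψ, W, H, T => sat φ W H T ∧ sat ψ W H T
  | .or φ ψ, W, H, T => sat φ W H T ∨ sat ψ W H T
  | .imp φ ψ, W, H, T =>
      (sat φ W H T → sat ψ W H T) ∧ (sat φ (tview W) T T → sat ψ (tview W) T T)
  | .K φ, W, _, _ => ∀ i ∈ W, sat φ W i.1 i.2

/-- ⟨W,H',T'⟩ ⊨ φ for all ⟨H',T'⟩ ∈ W. -/
def epSat (W : BView α) (φ : EForm α) : Prop := ∀ i ∈ W, sat φ W i.1 i.2

/-- W is an epistemic model of the theory Γ. -/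
def epModel (W : BView α) (Γ : Set (EForm α)) : Prop :=
  isBView W ∧ ∀ φ ∈ Γ, epSat W φ

/-- ⟨W,H,T⟩ is a belief model of the theory Γ. -/
def beliefModel (W : BView α) (H T : Set α) (Γ : Set (EForm α)) : Prop :=
  isBView W ∧ H ⊆ T ∧ (∀ φ ∈ Γ, sat φ W H T) ∧ ∀ φ ∈ Γ, epSat W φ

/-- Order ⪯ on belief interpretations: ⟨W',H',T'⟩ ⪯ ⟨W,H,T⟩. -/
def biLE (W' : BView α) (H' T' : Set α) (W : BView α) (H T : Set α) : Prop :=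
  (T' = T ∧ H' ⊆ H) ∧
  (∀ i ∈ W, ∃ H₁, (H₁, i.2) ∈ W' ∧ H₁ ⊆ i.1) ∧
  (∀ i ∈ W', ∃ H₁, (H₁, i.2) ∈ W ∧ i.1 ⊆ H₁)

/-- Strict order ≺ on belief interpretations. -/
def biLT (W' : BView α) (H' T' : Set α) (W : BView α) (H T : Set α) : Prop :=
  biLE W' H' T' W H T ∧ (W', H', T') ≠ (W, H, T)

/-- Order ⪯ on belief views. -/
def viewLE (W₁ W₂ : BView α) : Prop :=
  (∀ i ∈ W₂, ∃ H₁, (H₁, i.2) ∈ W₁ ∧ H₁ ⊆ i.1) ∧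
  (∀ i ∈ W₁, ∃ H₂, (H₂, i.2) ∈ W₂ ∧ i.1 ⊆ H₂)

/-- Strict order ≺ on belief views. -/
def viewLT (W₁ W₂ : BView α) : Prop := viewLE W₁ W₂ ∧ W₁ ≠ W₂

/-- ⟨W,T⟩ is an equilibrium belief model of Γ. -/
def eqBeliefModel (Γ : Set (EForm α)) (W : BView α) (T : Set α) : Prop :=
  totalView W ∧ beliefModel W T T Γ ∧
  ∀ W' H' T', beliefModel W' H' T' Γ → ¬ biLT W' H' T' W T T

/-- ⟨W,T⟩ is a weak equilibrium belief model of Γ: no belief-total (i.e. with total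
view) belief model of Γ is ≺-smaller. -/
def weakEqBeliefModel (Γ : Set (EForm α)) (W : BView α) (T : Set α) : Prop :=
  totalView W ∧ beliefModel W T T Γ ∧
  ∀ W' H' T', totalView W' → beliefModel W' H' T' Γ → ¬ biLT W' H' T' W T T

/-- Identification of a set of propositional interpretations with a total belief view. -/
def ofSets (S : Set (Set α)) : BView α := (fun T => (T, T)) '' S

/-- W is a FAEEL-world view of Γ iff W = { T : ⟨W,T⟩ is an equilibrium belief model }. -/
def FAEEL (Γ : Set (EForm α)) (W : BView α) : Prop :=
  isBView W ∧ totalView W ∧ W = ofSets {T | eqBeliefModel Γ W T}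

/-- W is a weak autoepistemic world view of Γ. -/
def weakAEWorldView (Γ : Set (EForm α)) (W : BView α) : Prop :=
  isBView W ∧ totalView W ∧ W = ofSets {T | weakEqBeliefModel Γ W T}

/-- W is a FEEL-world view of Γ. -/
def FEEL (Γ : Set (EForm α)) (W : BView α) : Prop :=
  totalView W ∧ epModel W Γ ∧ ∀ W', epModel W' Γ → ¬ viewLT W' W

/-- A belief view is simple iff ⟨H,T⟩,⟨H',T⟩ ∈ W imply H = H'. -/
def simpleView (W : BView α) : Prop := ∀ i ∈ W, ∀ j ∈ W, i.2 = j.2 → i.1 = j.1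

/-- W is an EEL-world view of Γ. -/
def EEL (Γ : Set (EForm α)) (W : BView α) : Prop :=
  totalView W ∧ epModel W Γ ∧
  ¬ ∃ W', simpleView W' ∧ epModel W' Γ ∧ tview W' = W ∧ ∃ i ∈ W', i.1 ⊂ i.2

/-- Ordinary here-and-there satisfaction (for objective, i.e. K-free, formulas). -/
def htSat (φ : EForm α) (H T : Set α) : Prop := sat φ (∅ : BView α) H T

/-- T is a stable model of the (objective) theory Δ. -/
def stableModel (Δ : Set (EForm α)) (T : Set α) : Prop :=
  (∀ φ ∈ Δ, htSat φ T T) ∧ ∀ H, H ⊂ T → ¬ ∀ φ ∈ Δ, htSat φ H T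

/-- SM[Δ] : the set of stable models of Δ. -/
def SMset (Δ : Set (EForm α)) : Set (Set α) := {T | stableModel Δ T}

/-- Subjective reduct of a formula w.r.t. a belief view W and a signature U:
each maximal subformula Kφ with Atoms(φ) ⊆ U is replaced by ⊤ if W ⊨ Kφ
and by ⊥ otherwise. -/
noncomputable def reduct (W : BView α) (U : Set α) : EForm α → EForm α
  | .bot => .bot
  | .atom a => .atom a
  | .and φ ψ => .and (reduct W U φ) (reduct W U ψ)
  | .or φ ψ => .or (reduct W U φ) (reduct W U ψ)
  | .imp φ ψ => .imp (reduct W U φ) (reduct W U ψ)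
  | .K φ =>
      if φ.atoms ⊆ U then (if epSat W (.K φ) then EForm.top else .bot)
      else .K (reduct W U φ)

/-- W is a G91-world view of Γ iff W = SM[Γ^W]. -/
def G91 (Γ : Set (EForm α)) (W : BView α) : Prop :=
  isBView W ∧ totalView W ∧ W = ofSets (SMset (reduct W Set.univ '' Γ))

/-- Negatively subjective reduct: each maximal subformula ¬Kφ is replaced
by ⊤ if W ⊭ Kφ and by ⊥ otherwise. -/
noncomputable def negReduct (W : BView α) : EForm α → EForm α
  | .bot => .bot
  | .atom a => .atom a
  | .and φ ψ => .and (negReduct W φ) (negReduct W ψ)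
  | .or φ ψ => .or (negReduct W φ) (negReduct W ψ)
  | .imp (.K φ) .bot => if epSat W (.K φ) then .bot else EForm.top
  | .imp φ ψ => .imp (negReduct W φ) (negReduct W ψ)
  | .K φ => .K (negReduct W φ)

/-- Atom, ⊤ or ⊥. -/
def isAtomBase (φ : EForm α) : Prop := (∃ a, φ = .atom a) ∨ φ = EForm.top ∨ φ = .bot

/-- Objective literals: l, ¬l or ¬¬l for l an atom, ⊤ or ⊥. -/
def isObjLit (φ : EForm α) : Prop :=
  isAtomBase φ ∨ (∃ ψ, isAtomBase ψ ∧ φ = EForm.neg ψ) ∨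
    (∃ ψ, isAtomBase ψ ∧ φ = EForm.neg (EForm.neg ψ))

/-- Subjective literals: Kl, ¬Kl or ¬¬Kl for l an objective literal. -/
def isSubjLit (φ : EForm α) : Prop :=
  (∃ l, isObjLit l ∧ φ = .K l) ∨ (∃ l, isObjLit l ∧ φ = EForm.neg (.K l)) ∨
    (∃ l, isObjLit l ∧ φ = EForm.neg (EForm.neg (.K l)))

/-- Positive subjective literals: Kl. -/
def isPosSubjLit (φ : EForm α) : Prop := ∃ l, isObjLit l ∧ φ = .K l

/-- A rule: a head disjunction of atoms and a body list of literals. -/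
structure ERule (α : Type) where
  head : List α
  body : List (EForm α)

/-- Wellformedness of a rule: every body member is an (objective or subjective) literal. -/
def ERule.wf (r : ERule α) : Prop := ∀ φ ∈ r.body, isObjLit φ ∨ isSubjLit φ

/-- Disjunction of atoms (⊥ when empty). -/
def disjForm : List α → EForm α
  | [] => .bot
  | a :: l => .or (.atom a) (disjForm l)

/-- Conjunction of formulas (⊤ when empty). -/
def conjForm : List (EForm α) → EForm α
  | [] => EForm.top
  | φ :: l => .and φ (conjForm l)

/-- The formula Head(r) ← Body(r) corresponding to a rule. -/
def ERule.form (r : ERule α) : EForm α := .imp (conjForm r.body) (disjForm r.head)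

/-- Atoms of Head(r). -/
def ERule.headAtoms (r : ERule α) : Set α := {a | a ∈ r.head}

/-- Atoms of Body_obj(r). -/
def ERule.objBodyAtoms (r : ERule α) : Set α := {a | ∃ φ ∈ r.body, isObjLit φ ∧ a ∈ φ.atoms}

/-- Atoms of Body_sub(r). -/
def ERule.subjBodyAtoms (r : ERule α) : Set α := {a | ∃ φ ∈ r.body, isSubjLit φ ∧ a ∈ φ.atoms}

/-- Atoms of Body⁺_sub(r). -/
def ERule.posSubjBodyAtoms (r : ERule α) : Set α :=
  {a | ∃ φ ∈ r.body, isPosSubjLit φ ∧ a ∈ φ.atoms}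

/-- Atoms(r). -/
def ERule.atoms (r : ERule α) : Set α := r.headAtoms ∪ {a | ∃ φ ∈ r.body, a ∈ φ.atoms}

/-- A rule is objective if all its body literals are objective. -/
def ERule.objective (r : ERule α) : Prop := ∀ φ ∈ r.body, isObjLit φ

/-- A program is a set of rules. -/
abbrev EProgram (α : Type) := Set (ERule α)

def progWF (P : EProgram α) : Prop := ∀ r ∈ P, r.wf

/-- The theory consisting of the formulas of the rules of a program. -/
def progTheory (P : EProgram α) : Set (EForm α) := ERule.form '' P

def progAtoms (P : EProgram α) : Set α := {a | ∃ r ∈ P, a ∈ r.atoms}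

def progObjective (P : EProgram α) : Prop := ∀ r ∈ P, r.objective

/-- U is an epistemic splitting set of P. -/
def splittingSet (P : EProgram α) (U : Set α) : Prop :=
  ∀ r ∈ P, r.atoms ⊆ U ∨ (r.objBodyAtoms ∪ r.headAtoms) ∩ U = ∅

/-- ⟨B,Tp⟩ is a splitting of P w.r.t. U. -/
def isSplitting (P : EProgram α) (U : Set α) (B Tp : EProgram α) : Prop :=
  B ∩ Tp = ∅ ∧ B ∪ Tp = P ∧ (∀ r ∈ B, r.atoms ⊆ U) ∧
    ∀ r ∈ Tp, (r.objBodyAtoms ∪ r.headAtoms) ∩ U = ∅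

/-- Subjective reduct of a rule. -/
noncomputable def ruleReduct (W : BView α) (U : Set α) (r : ERule α) : ERule α :=
  ⟨r.head, r.body.map (reduct W U)⟩

/-- E_U(Π,W) := (T_U(Π))^W_U, here taking the top part Tp as argument. -/
noncomputable def EU (Tp : EProgram α) (W : BView α) (U : Set α) : EProgram α :=
  ruleReduct W U '' Tp

/-- W_b ⊔ W_t (for total belief views: pointwise unions). -/
def vjoin (W₁ W₂ : BView α) : BView α :=
  {i | ∃ j ∈ W₁, ∃ k ∈ W₂, i = (j.1 ∪ k.1, j.2 ∪ k.2)}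

/-- W|_U (for total belief views: pointwise intersection with U). -/
def vrestrict (W : BView α) (U : Set α) : BView α :=
  {i | ∃ j ∈ W, i = (j.1 ∩ U, j.2 ∩ U)}

/-- Epistemic dependence dep(a,b). -/
def dep (P : EProgram α) (a b : α) : Prop :=
  ∃ r ∈ P, a ∈ r.headAtoms ∪ r.objBodyAtoms ∧ b ∈ r.subjBodyAtoms

/-- Positive epistemic dependence dep⁺(a,b). -/
def depPos (P : EProgram α) (a b : α) : Prop :=
  ∃ r ∈ P, a ∈ r.headAtoms ∪ r.objBodyAtoms ∧ b ∈ r.posSubjBodyAtoms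

/-- P is epistemically stratified. -/
def stratified (P : EProgram α) : Prop :=
  ∃ lam : α → ℕ,
    (∀ r ∈ P, ∀ a ∈ r.atoms \ r.subjBodyAtoms, ∀ b ∈ r.atoms \ r.subjBodyAtoms,
      lam a = lam b) ∧
    ∀ a b, dep P a b → lam a > lam b

/-- P is epistemically tight. -/
def tight (P : EProgram α) : Prop :=
  ∃ lam : α → ℕ,
    (∀ r ∈ P, ∀ a ∈ r.atoms \ r.subjBodyAtoms, ∀ b ∈ r.atoms \ r.subjBodyAtoms,
      lam a = lam b) ∧
    ∀ a b, depPos P a b → lam a > lam b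

/-- A semantics S satisfies the epistemic splitting property. -/
def satisfiesSplitting (S : EProgram α → BView α → Prop) : Prop :=
  ∀ P : EProgram α, progWF P → ∀ U : Set α, splittingSet P U →
    ∀ B Tp : EProgram α, isSplitting P U B Tp →
      ∀ W : BView α,
        S P W ↔ ∃ Wb Wt, S B Wb ∧ S (EU Tp Wb U) Wt ∧ W = vjoin Wb Wt

/-- A semantics S satisfies supra-ASP. -/
def supraASP (S : EProgram α → BView α → Prop) : Prop :=
  ∀ P : EProgram α, progWF P → progObjective P →
    (SMset (progTheory P) ≠ ∅ ∧ ∀ W, (S P W ↔ W = ofSets (SMset (progTheory P)))) ∨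
    (SMset (progTheory P) = ∅ ∧ ∀ W, ¬ S P W)

end Epist

/-!
Write `Q` for `B ∪ E_U(Π, W)`. The reduct only replaces subformulas `Kφ` over `U` by their
truth value in `W`, so `W` itself satisfies `Π` iff it satisfies `Q`. For a view `V ≺ W` one has
`Vᵗ = W`, so negated literals and all "there" components are evaluated in `W`, where the reduct is
harmless; and a positive `Kl` true in `V` is true in `W`. Hence models of `Q` below `W` are models
of `Π`. Conversely, given a model `V ≺ W` of `Π`, make every interpretation of `V` total outside
`U`: the result is still a model of `Q` below `W`, because the top part only sees `U` through
the reduct. If it is strictly below `W` we are done; otherwise `V` was already total on `U`, so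
its `K`-literals over `U` agree with `W`, and `V` itself is a model of `Q`.
-/

namespace Epist

variable {α : Type}

def KFree : EForm α → Prop
  | .bot | .atom _ => True
  | .and φ ψ | .or φ ψ | .imp φ ψ => KFree φ ∧ KFree ψ
  | .K _ => False

def totalOn (S : Set α) (V : BView α) : Prop := ∀ i ∈ V, i.2 ∩ S ⊆ i.1

def fillOutside (U : Set α) (i : Set α × Set α) : Set α × Set α := (i.1 ∩ U ∪ i.2 \ U, i.2)

section Satisfaction

variable {V W : BView α} {H T : Set α}

theorem sat_top : sat (EForm.top : EForm α) V H T := ⟨id, id⟩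

theorem sat_ite_top_bot (p : Prop) [Decidable p] :
    sat (if p then EForm.top else .bot : EForm α) V H T ↔ p := by
  split_ifs with hp
  · exact iff_of_true sat_top hp
  · exact iff_of_false id hp

theorem sat_K_iff_epSat {φ : EForm α} : sat (.K φ) V H T ↔ epSat V (.K φ) := by
  refine ⟨fun h _ _ => h, fun h => ?_⟩
  rcases V.eq_empty_or_nonempty with rfl | ⟨i, hi⟩
  · exact fun _ h => h.elim
  · exact h i hi

theorem sat_congr_of_kFree {φ : EForm α} (hφ : KFree φ) {V₁ V₂ : BView α}
    {H₁ H₂ T₁ T₂ : Set α} (hH : ∀ a ∈ φ.atoms, a ∈ H₁ ↔ a ∈ H₂)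
    (hT : ∀ a ∈ φ.atoms, a ∈ T₁ ↔ a ∈ T₂) : sat φ V₁ H₁ T₁ ↔ sat φ V₂ H₂ T₂ := by
  induction φ generalizing V₁ V₂ H₁ H₂ T₁ T₂ with
  | bot => rfl
  | atom a => exact hH a rfl
  | and φ ψ ihφ ihψ =>
    simp only [EForm.atoms, Set.mem_union, or_imp, forall_and] at hH hT
    exact and_congr (ihφ hφ.1 hH.1 hT.1) (ihψ hφ.2 hH.2 hT.2)
  | or φ ψ ihφ ihψ =>
    simp only [EForm.atoms, Set.mem_union, or_imp, forall_and] at hH hT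
    exact or_congr (ihφ hφ.1 hH.1 hT.1) (ihψ hφ.2 hH.2 hT.2)
  | imp φ ψ ihφ ihψ =>
    simp only [EForm.atoms, Set.mem_union, or_imp, forall_and] at hH hT
    exact and_congr (imp_congr (ihφ hφ.1 hH.1 hT.1) (ihψ hφ.2 hH.2 hT.2))
      (imp_congr (ihφ hφ.1 hT.1 hT.1) (ihψ hφ.2 hT.2 hT.2))
  | K => exact hφ.elim

theorem sat_iff_sat_total_of_kFree {φ : EForm α} (hφ : KFree φ) {V' : BView α} {S : Set α}
    (hHT : H ⊆ T) (hTS : T ∩ S ⊆ H) (hφS : φ.atoms ⊆ S) : sat φ V H T ↔ sat φ V' T T :=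
  sat_congr_of_kFree hφ (fun _ ha => ⟨(hHT ·), fun h => hTS ⟨h, hφS ha⟩⟩) fun _ _ => Iff.rfl

theorem tview_tview (V : BView α) : tview (tview V) = tview V := by
  simp only [tview, Set.image_image]

theorem tview_eq_self (hW : totalView W) : tview W = W := by
  have h : ∀ i ∈ W, (i.2, i.2) = i := fun i hi => Prod.ext (hW i hi).symm rfl
  refine Set.ext fun j => ⟨?_, fun hj => ⟨j, hj, h j hj⟩⟩
  rintro ⟨i, hi, rfl⟩
  exact (h i hi).symm ▸ hi

theorem tview_eq_of_viewLE (hW : totalView W) (h : viewLE V W) : tview V = W := by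
  refine Set.ext fun j => ⟨?_, fun hj => ?_⟩
  · rintro ⟨i, hi, rfl⟩
    obtain ⟨H, hH, -⟩ := h.2 i hi
    have hHi : H = i.2 := hW _ hH
    rwa [hHi] at hH
  · obtain ⟨H, hH, -⟩ := h.1 j hj
    exact ⟨_, hH, Prod.ext (hW j hj).symm rfl⟩

theorem totalView.subset (hW : totalView W) : ∀ i ∈ W, i.1 ⊆ i.2 :=
  fun i hi => (hW i hi).subset

theorem sat_tview_of_sat (hV : ∀ i ∈ V, i.1 ⊆ i.2) {φ : EForm α} (hHT : H ⊆ T)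
    (h : sat φ V H T) : sat φ (tview V) T T := by
  induction φ generalizing H T with
  | bot => exact h
  | atom a => exact hHT h
  | and φ ψ ihφ ihψ => exact ⟨ihφ hHT h.1, ihψ hHT h.2⟩
  | or φ ψ ihφ ihψ => exact h.imp (ihφ hHT) (ihψ hHT)
  | imp φ ψ => exact ⟨h.2, by rw [tview_tview]; exact h.2⟩
  | K φ ih =>
    rintro _ ⟨i, hi, rfl⟩
    exact ih (hV i hi) (h i hi)

theorem sat_neg_iff (hV : ∀ i ∈ V, i.1 ⊆ i.2) {φ : EForm α} (hHT : H ⊆ T) :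
    sat φ.neg V H T ↔ ¬ sat φ (tview V) T T :=
  ⟨fun h => h.2, fun h => ⟨fun hφ => h (sat_tview_of_sat hV hHT hφ), h⟩⟩

theorem sat_K_iff_sat_K_tview {l : EForm α} (hl : KFree l) {S : Set α}
    (hV : ∀ i ∈ V, i.1 ⊆ i.2) (hVS : totalOn S V) (hlS : l.atoms ⊆ S) (H' T' : Set α) :
    sat (.K l) V H T ↔ sat (.K l) (tview V) H' T' := by
  show (∀ i ∈ V, _) ↔ ∀ j ∈ (fun i => (i.2, i.2)) '' V, _
  rw [Set.forall_mem_image]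
  exact forall₂_congr fun i hi => sat_iff_sat_total_of_kFree hl (hV i hi) (hVS i hi) hlS

end Satisfaction

section Reduct

variable {U : Set α} {V W : BView α} {H T : Set α}

theorem reduct_of_kFree (W : BView α) (U : Set α) {φ : EForm α} (hφ : KFree φ) :
    reduct W U φ = φ := by
  induction φ with
  | bot | atom => rfl
  | and φ ψ ihφ ihψ | or φ ψ ihφ ihψ | imp φ ψ ihφ ihψ => rw [reduct, ihφ hφ.1, ihψ hφ.2]
  | K => exact hφ.elim

theorem sat_reduct_iff (hW : totalView W) (U : Set α) (φ : EForm α) :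
    sat (reduct W U φ) W H T ↔ sat φ W H T := by
  induction φ generalizing H T with
  | bot | atom => rfl
  | and φ ψ ihφ ihψ => exact and_congr ihφ ihψ
  | or φ ψ ihφ ihψ => exact or_congr ihφ ihψ
  | imp φ ψ ihφ ihψ =>
    show (_ → _) ∧ (sat _ (tview W) _ _ → _) ↔ (_ → _) ∧ (sat _ (tview W) _ _ → _)
    rw [tview_eq_self hW]
    exact and_congr (imp_congr ihφ ihψ) (imp_congr ihφ ihψ)
  | K φ ih =>
    by_cases hφU : φ.atoms ⊆ U
    · simp only [reduct, if_pos hφU]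
      rw [sat_ite_top_bot, sat_K_iff_epSat]
    · simp only [reduct, if_neg hφU]
      exact forall₂_congr fun _ _ => ih

theorem sat_reduct_K_of_subset {l : EForm α} (hlU : l.atoms ⊆ U) :
    sat (reduct W U (.K l)) V H T ↔ epSat W (.K l) := by
  simp only [reduct, if_pos hlU]
  rw [sat_ite_top_bot]

theorem sat_reduct_neg_iff (hW : totalView W) (hVW : tview V = W) (hV : ∀ i ∈ V, i.1 ⊆ i.2)
    (hHT : H ⊆ T) (ψ : EForm α) : sat (reduct W U ψ.neg) V H T ↔ sat ψ.neg V H T := by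
  show sat (reduct W U ψ).neg V H T ↔ _
  rw [sat_neg_iff hV hHT, sat_neg_iff hV hHT, hVW, sat_reduct_iff hW]

end Reduct

section Literals

variable {φ l : EForm α}

theorem isAtomBase.kFree (h : isAtomBase φ) : KFree φ := by
  rcases h with ⟨a, rfl⟩ | rfl | rfl
  exacts [trivial, ⟨trivial, trivial⟩, trivial]

theorem isObjLit.kFree (h : isObjLit φ) : KFree φ := by
  rcases h with h | ⟨ψ, hψ, rfl⟩ | ⟨ψ, hψ, rfl⟩
  exacts [h.kFree, ⟨hψ.kFree, trivial⟩, ⟨⟨hψ.kFree, trivial⟩, trivial⟩]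

theorem isAtomBase.atoms_subsingleton (h : isAtomBase φ) : φ.atoms.Subsingleton := by
  rcases h with ⟨a, rfl⟩ | rfl | rfl
  exacts [Set.subsingleton_singleton, by simp [EForm.top, EForm.neg, EForm.atoms],
    Set.subsingleton_empty]

theorem isObjLit.atoms_subsingleton (h : isObjLit φ) : φ.atoms.Subsingleton := by
  rcases h with h | ⟨ψ, hψ, rfl⟩ | ⟨ψ, hψ, rfl⟩ <;>
    simpa [EForm.neg, EForm.atoms] using isAtomBase.atoms_subsingleton ‹_›

/-- An objective literal has at most one atom. -/
theorem isObjLit.atoms_subset_compl {U : Set α} (h : isObjLit l) (hlU : ¬ l.atoms ⊆ U) :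
    l.atoms ⊆ Uᶜ := by
  obtain ⟨a, ha, haU⟩ := Set.not_subset.mp hlU
  intro b hb
  rwa [h.atoms_subsingleton hb ha]

theorem isLit_cases (h : isObjLit φ ∨ isSubjLit φ) :
    isObjLit φ ∨ (∃ l, isObjLit l ∧ φ = .K l) ∨ ∃ ψ : EForm α, φ = ψ.neg := by
  rcases h with h | ⟨l, hl, rfl⟩ | ⟨l, -, rfl⟩ | ⟨l, -, rfl⟩
  exacts [.inl h, .inr (.inl ⟨l, hl, rfl⟩), .inr (.inr ⟨_, rfl⟩), .inr (.inr ⟨_, rfl⟩)]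

theorem reduct_K_of_not_subset {U : Set α} (W : BView α) (hl : isObjLit l)
    (hlU : ¬ l.atoms ⊆ U) : reduct W U (.K l) = .K l := by
  simp only [reduct, if_neg hlU, reduct_of_kFree W U hl.kFree]

variable {U : Set α} {V W : BView α} {H T : Set α}

theorem sat_reduct_of_sat (hW : totalView W) (hVW : tview V = W) (hV : ∀ i ∈ V, i.1 ⊆ i.2)
    (hφ : isObjLit φ ∨ isSubjLit φ) (hHT : H ⊆ T)
    (h : sat φ V H T) : sat (reduct W U φ) V H T := by
  rcases isLit_cases hφ with hφ | ⟨l, hl, rfl⟩ | ⟨ψ, rfl⟩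
  · rwa [reduct_of_kFree W U hφ.kFree]
  · by_cases hlU : l.atoms ⊆ U
    · rw [sat_reduct_K_of_subset hlU, ← sat_K_iff_epSat (H := T) (T := T), ← hVW]
      exact sat_tview_of_sat hV hHT h
    · rwa [reduct_K_of_not_subset W hl hlU]
  · exact (sat_reduct_neg_iff hW hVW hV hHT ψ).mpr h

theorem sat_reduct_iff_of_totalOn (hW : totalView W) (hVW : tview V = W)
    (hV : ∀ i ∈ V, i.1 ⊆ i.2) (hVU : totalOn U V) (hφ : isObjLit φ ∨ isSubjLit φ)
    (hHT : H ⊆ T) : sat (reduct W U φ) V H T ↔ sat φ V H T := by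
  rcases isLit_cases hφ with hφ | ⟨l, hl, rfl⟩ | ⟨ψ, rfl⟩
  · rw [reduct_of_kFree W U hφ.kFree]
  · by_cases hlU : l.atoms ⊆ U
    · rw [sat_reduct_K_of_subset hlU, ← sat_K_iff_epSat (H := T) (T := T), ← hVW]
      exact (sat_K_iff_sat_K_tview hl.kFree hV hVU hlU T T).symm
    · rw [reduct_K_of_not_subset W hl hlU]
  · exact sat_reduct_neg_iff hW hVW hV hHT ψ

/-- Off `U` the view `V` is total, and on `U` the reduct has already fixed every `K`-literal. -/
theorem sat_reduct_iff_of_totalOn_compl (hW : totalView W) (hVW : tview V = W)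
    (hV : ∀ i ∈ V, i.1 ⊆ i.2) (hVU : totalOn Uᶜ V)
    (hφ : isObjLit φ ∨ isSubjLit φ) (hφU : isObjLit φ → φ.atoms ⊆ Uᶜ) (hHT : H ⊆ T)
    (hTU : T ∩ Uᶜ ⊆ H) : sat (reduct W U φ) V H T ↔ sat (reduct W U φ) W T T := by
  rcases isLit_cases hφ with hφ | ⟨l, hl, rfl⟩ | ⟨ψ, rfl⟩
  · rw [reduct_of_kFree W U hφ.kFree]
    exact sat_iff_sat_total_of_kFree hφ.kFree hHT hTU (hφU hφ)
  · by_cases hlU : l.atoms ⊆ U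
    · rw [sat_reduct_K_of_subset hlU, sat_reduct_K_of_subset hlU]
    · rw [reduct_K_of_not_subset W hl hlU, ← hVW]
      exact sat_K_iff_sat_K_tview hl.kFree hV hVU (hl.atoms_subset_compl hlU) T T
  · show sat (reduct W U ψ).neg V H T ↔ sat (reduct W U ψ).neg W T T
    rw [sat_neg_iff hV hHT, sat_neg_iff hW.subset subset_rfl, hVW, tview_eq_self hW]

end Literals

section Rules

variable {U : Set α} {V W : BView α} {H T : Set α}

theorem sat_conjForm (L : List (EForm α)) : sat (conjForm L) V H T ↔ ∀ φ ∈ L, sat φ V H T := by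
  induction L with
  | nil => simpa [conjForm] using sat_top
  | cons φ L ih => simp only [conjForm, List.forall_mem_cons, ← ih]; rfl

theorem sat_disjForm (l : List α) : sat (disjForm l) V H T ↔ ∃ a ∈ l, a ∈ H := by
  induction l with
  | nil => simp [disjForm, sat]
  | cons a l ih =>
    show _ ∨ _ ↔ _
    rw [ih]
    simp only [List.mem_cons, exists_eq_or_imp]
    rfl

theorem sat_ruleForm (r : ERule α) :
    sat r.form V H T ↔ ((∀ φ ∈ r.body, sat φ V H T) → ∃ a ∈ r.head, a ∈ H) ∧
      ((∀ φ ∈ r.body, sat φ (tview V) T T) → ∃ a ∈ r.head, a ∈ T) := by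
  show (_ ∧ _) ↔ _
  rw [sat_conjForm, sat_disjForm, sat_conjForm, sat_disjForm]

theorem atoms_conjForm_subset (L : List (EForm α)) :
    (conjForm L).atoms ⊆ {a | ∃ φ ∈ L, a ∈ φ.atoms} := by
  induction L with
  | nil => simp [conjForm, EForm.top, EForm.neg, EForm.atoms]
  | cons φ L ih =>
    rintro a (ha | ha)
    · exact ⟨φ, List.mem_cons_self, ha⟩
    · obtain ⟨ψ, hψ, ha⟩ := ih ha
      exact ⟨ψ, List.mem_cons_of_mem _ hψ, ha⟩

theorem atoms_disjForm_subset (l : List α) : (disjForm l).atoms ⊆ {a | a ∈ l} := by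
  induction l with
  | nil => simp [disjForm, EForm.atoms]
  | cons b l ih =>
    rintro a (rfl | ha)
    · exact List.mem_cons_self
    · exact List.mem_cons_of_mem _ (ih ha)

theorem ERule.atoms_form_subset (r : ERule α) : r.form.atoms ⊆ r.atoms := by
  rintro a (ha | ha)
  · exact .inr (atoms_conjForm_subset r.body ha)
  · exact .inl (atoms_disjForm_subset r.head ha)

theorem sat_ruleReduct_form_iff (hW : totalView W) (hVW : tview V = W) (r : ERule α) :
    sat (ruleReduct W U r).form V H T ↔
      ((∀ φ ∈ r.body, sat (reduct W U φ) V H T) → ∃ a ∈ r.head, a ∈ H) ∧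
      ((∀ φ ∈ r.body, sat φ W T T) → ∃ a ∈ r.head, a ∈ T) := by
  simp only [sat_ruleForm, hVW, ruleReduct, List.forall_mem_map, sat_reduct_iff hW]

theorem epSat_ruleReduct_form_iff (hW : totalView W) (r : ERule α) :
    epSat W (ruleReduct W U r).form ↔ epSat W r.form := by
  simp only [epSat, sat_ruleReduct_form_iff hW (tview_eq_self hW), sat_reduct_iff hW,
    sat_ruleForm, tview_eq_self hW]

variable {r : ERule α}

theorem epSat_form_of_epSat_ruleReduct (hW : totalView W) (hVW : tview V = W)
    (hV : ∀ i ∈ V, i.1 ⊆ i.2) (hr : r.wf) (h : epSat V (ruleReduct W U r).form) :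
    epSat V r.form := by
  intro i hi
  obtain ⟨hhere, hthere⟩ := (sat_ruleReduct_form_iff hW hVW r).mp (h i hi)
  rw [sat_ruleForm, hVW]
  exact ⟨fun hb => hhere fun φ hφ => sat_reduct_of_sat hW hVW hV (hr φ hφ) (hV i hi) (hb φ hφ),
    hthere⟩

theorem epSat_ruleReduct_of_totalOn (hW : totalView W) (hVW : tview V = W)
    (hV : ∀ i ∈ V, i.1 ⊆ i.2) (hr : r.wf) (hVU : totalOn U V) (h : epSat V r.form) :
    epSat V (ruleReduct W U r).form := by
  intro i hi
  obtain ⟨hhere, hthere⟩ := (sat_ruleForm r).mp (h i hi)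
  rw [hVW] at hthere
  rw [sat_ruleReduct_form_iff hW hVW]
  exact ⟨fun hb => hhere fun φ hφ =>
    (sat_reduct_iff_of_totalOn hW hVW hV hVU (hr φ hφ) (hV i hi)).mp (hb φ hφ), hthere⟩

theorem epSat_ruleReduct_of_totalOn_compl (hW : totalView W) (hVW : tview V = W)
    (hV : ∀ i ∈ V, i.1 ⊆ i.2) (hr : r.wf) (hVU : totalOn Uᶜ V)
    (hrU : Disjoint (r.objBodyAtoms ∪ r.headAtoms) U) (h : epSat W (ruleReduct W U r).form) :
    epSat V (ruleReduct W U r).form := by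
  intro i hi
  have hiW : (i.2, i.2) ∈ W := hVW ▸ Set.mem_image_of_mem _ hi
  obtain ⟨hhere, hthere⟩ := (sat_ruleReduct_form_iff hW (tview_eq_self hW) r).mp (h _ hiW)
  rw [sat_ruleReduct_form_iff hW hVW]
  refine ⟨fun hb => ?_, hthere⟩
  obtain ⟨a, ha, haT⟩ := hhere fun φ hφ =>
    (sat_reduct_iff_of_totalOn_compl hW hVW hV hVU (hr φ hφ)
      (fun hobj _ hb => Set.disjoint_left.mp hrU (.inl ⟨φ, hφ, hobj, hb⟩)) (hV i hi)
      (hVU i hi)).mp (hb φ hφ)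
  exact ⟨a, ha, hVU i hi ⟨haT, Set.disjoint_left.mp hrU (.inr ha)⟩⟩

end Rules

section FillOutside

variable {U : Set α} {V W : BView α}

theorem tview_image_fillOutside (V : BView α) : tview (fillOutside U '' V) = tview V := by
  simp only [tview, fillOutside, Set.image_image]

theorem fillOutside_subset {i : Set α × Set α} (hi : i.1 ⊆ i.2) :
    (fillOutside U i).1 ⊆ (fillOutside U i).2 :=
  Set.union_subset (Set.inter_subset_left.trans hi) Set.sdiff_subset

theorem image_fillOutside_subset (hV : ∀ i ∈ V, i.1 ⊆ i.2) :
    ∀ j ∈ fillOutside U '' V, j.1 ⊆ j.2 := by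
  rintro _ ⟨i, hi, rfl⟩
  exact fillOutside_subset (hV i hi)

theorem totalOn_compl_image_fillOutside : totalOn Uᶜ (fillOutside U '' V) := by
  rintro _ ⟨i, -, rfl⟩ a ⟨ha, haU⟩
  exact .inr ⟨ha, haU⟩

theorem sat_fillOutside_iff {φ : EForm α} (hφU : φ.atoms ⊆ U) (H T : Set α) :
    sat φ (fillOutside U '' V) (fillOutside U (H, T)).1 T ↔ sat φ V H T := by
  induction φ generalizing H T with
  | bot => rfl
  | atom a =>
    have haU : a ∈ U := hφU rfl
    exact ⟨fun h => h.elim And.left fun h => (h.2 haU).elim, fun h => .inl ⟨h, haU⟩⟩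
  | and φ ψ ihφ ihψ =>
    rw [EForm.atoms, Set.union_subset_iff] at hφU
    exact and_congr (ihφ hφU.1 H T) (ihψ hφU.2 H T)
  | or φ ψ ihφ ihψ =>
    rw [EForm.atoms, Set.union_subset_iff] at hφU
    exact or_congr (ihφ hφU.1 H T) (ihψ hφU.2 H T)
  | imp φ ψ ihφ ihψ =>
    rw [EForm.atoms, Set.union_subset_iff] at hφU
    show (_ → _) ∧ (sat _ (tview _) _ _ → _) ↔ _
    rw [tview_image_fillOutside]
    exact and_congr (imp_congr (ihφ hφU.1 H T) (ihψ hφU.2 H T)) Iff.rfl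
  | K φ ih =>
    show (∀ j ∈ fillOutside U '' V, _) ↔ _
    rw [Set.forall_mem_image]
    exact forall₂_congr fun i _ => ih hφU i.1 i.2

theorem epSat_image_fillOutside_iff {φ : EForm α} (hφU : φ.atoms ⊆ U) :
    epSat (fillOutside U '' V) φ ↔ epSat V φ := by
  rw [epSat, Set.forall_mem_image]
  exact forall₂_congr fun i _ => sat_fillOutside_iff hφU i.1 i.2

theorem viewLE_image_fillOutside (hW : totalView W) (hV : ∀ i ∈ V, i.1 ⊆ i.2)
    (h : viewLE V W) : viewLE (fillOutside U '' V) W := by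
  refine ⟨fun j hj => ?_, ?_⟩
  · obtain ⟨H, hH, hHj⟩ := h.1 j hj
    exact ⟨_, ⟨_, hH, rfl⟩, (hW j hj).symm ▸ fillOutside_subset (hHj.trans (hW j hj).subset)⟩
  · rintro _ ⟨i, hi, rfl⟩
    have hiW : (i.2, i.2) ∈ W := tview_eq_of_viewLE hW h ▸ Set.mem_image_of_mem _ hi
    exact ⟨i.2, hiW, fillOutside_subset (hV i hi)⟩

theorem totalOn_of_image_fillOutside_eq (hW : totalView W) (h : fillOutside U '' V = W) :
    totalOn U V := by
  intro i hi a ha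
  have hfi : (fillOutside U i).1 = i.2 := hW _ (h ▸ Set.mem_image_of_mem _ hi)
  rw [← hfi] at ha
  exact ha.1.elim And.left fun h => (h.2 ha.2).elim

end FillOutside

section Programs

variable {U : Set α} {V W : BView α} {B Tp : EProgram α}

theorem epModel_progTheory_union_iff {C : EProgram α} :
    epModel V (progTheory (B ∪ C)) ↔
      isBView V ∧ (∀ r ∈ B, epSat V r.form) ∧ ∀ r ∈ C, epSat V r.form := by
  simp only [epModel, progTheory, Set.image_union, Set.mem_union, forall₂_or_left,
    Set.forall_mem_image]

theorem forall_mem_EU {p : ERule α → Prop} :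
    (∀ r ∈ EU Tp W U, p r) ↔ ∀ r ∈ Tp, p (ruleReduct W U r) :=
  Set.forall_mem_image

theorem epModel_reduct_iff (hW : totalView W) :
    epModel W (progTheory (B ∪ EU Tp W U)) ↔ epModel W (progTheory (B ∪ Tp)) := by
  simp only [epModel_progTheory_union_iff, forall_mem_EU, epSat_ruleReduct_form_iff hW]

theorem epModel_of_epModel_reduct (hW : totalView W) (hle : viewLE V W) (hTp : progWF Tp)
    (h : epModel V (progTheory (B ∪ EU Tp W U))) : epModel V (progTheory (B ∪ Tp)) := by
  rw [epModel_progTheory_union_iff, forall_mem_EU] at h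
  obtain ⟨hV, hB, hE⟩ := h
  exact epModel_progTheory_union_iff.mpr ⟨hV, hB, fun r hr =>
    epSat_form_of_epSat_ruleReduct hW (tview_eq_of_viewLE hW hle) hV.2 (hTp r hr) (hE r hr)⟩

theorem exists_viewLT_epModel_reduct (hW : totalView W) (hTp : progWF Tp)
    (hBU : ∀ r ∈ B, r.atoms ⊆ U) (hTpU : ∀ r ∈ Tp, (r.objBodyAtoms ∪ r.headAtoms) ∩ U = ∅)
    (hWQ : epModel W (progTheory (B ∪ EU Tp W U))) (hlt : viewLT V W)
    (hV : epModel V (progTheory (B ∪ Tp))) :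
    ∃ V', viewLT V' W ∧ epModel V' (progTheory (B ∪ EU Tp W U)) := by
  simp only [epModel_progTheory_union_iff, forall_mem_EU] at hWQ hV ⊢
  obtain ⟨⟨hVne, hVsub⟩, hVB, hVT⟩ := hV
  have htV : tview V = W := tview_eq_of_viewLE hW hlt.1
  by_cases hfill : fillOutside U '' V = W
  · have hVU := totalOn_of_image_fillOutside_eq hW hfill
    exact ⟨V, hlt, ⟨hVne, hVsub⟩, hVB, fun r hr =>
      epSat_ruleReduct_of_totalOn hW htV hVsub (hTp r hr) hVU (hVT r hr)⟩
  · refine ⟨fillOutside U '' V, ⟨viewLE_image_fillOutside hW hVsub hlt.1, hfill⟩,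
      ⟨hVne.image _, image_fillOutside_subset hVsub⟩, fun r hr => ?_, fun r hr => ?_⟩
    · exact (epSat_image_fillOutside_iff (r.atoms_form_subset.trans (hBU r hr))).mpr (hVB r hr)
    · exact epSat_ruleReduct_of_totalOn_compl hW ((tview_image_fillOutside V).trans htV)
        (image_fillOutside_subset hVsub) (hTp r hr)
        totalOn_compl_image_fillOutside (Set.disjoint_iff_inter_eq_empty.mpr (hTpU r hr))
        (hWQ.2.2 r hr)

end Programs

theorem FEEL_of_FEEL {Γ Δ : Set (EForm α)} {W : BView α} (hmodel : epModel W Γ → epModel W Δ)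
    (hbelow : epModel W Γ → ∀ V, viewLT V W → epModel V Δ → ∃ V', viewLT V' W ∧ epModel V' Γ)
    (h : FEEL Γ W) : FEEL Δ W := by
  obtain ⟨hW, hWΓ, hmin⟩ := h
  refine ⟨hW, hmodel hWΓ, fun V hVΔ hlt => ?_⟩
  obtain ⟨V', hV'W, hV'Γ⟩ := hbelow hWΓ V hlt hVΔ
  exact hmin V' hV'Γ hV'W

theorem stmt7_general {α : Type} (P : EProgram α) (hwf : progWF P) (U : Set α)
    (B Tp : EProgram α) (hBT : isSplitting P U B Tp)
    (W : BView α) (hW : totalView W) :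
    FEEL (progTheory P) W ↔ FEEL (progTheory (B ∪ EU Tp W U)) W := by
  obtain ⟨-, rfl, hBU, hTpU⟩ := hBT
  have hTp : progWF Tp := fun r hr => hwf r (.inr hr)
  exact ⟨FEEL_of_FEEL (epModel_reduct_iff hW).mpr fun _ V hlt hV =>
      ⟨V, hlt, epModel_of_epModel_reduct hW hlt.1 hTp hV⟩,
    FEEL_of_FEEL (epModel_reduct_iff hW).mp fun hWQ _ hlt hV =>
      exists_viewLT_epModel_reduct hW hTp hBU hTpU hWQ hlt hV⟩

/-- W is a FEEL-world view of Π iff W is a FEEL-world view of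
B_U(Π) ∪ E_U(Π,W). -/
theorem stmt7 {α : Type} (P : EProgram α) (hwf : progWF P) (U : Set α)
    (hU : splittingSet P U) (B Tp : EProgram α) (hBT : isSplitting P U B Tp)
    (W : BView α) (hW : totalView W) :
    FEEL (progTheory P) W ↔ FEEL (progTheory (B ∪ EU Tp W U)) W :=
  stmt7_general P hwf U B Tp hBT W hW

end Epist
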